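/- Let ξ < 0, μ ∈ ℝ, σ > 0 satisfy μ − (σ/ξ)(Γ(1 − ξ) − 1) > 0. Let Y be a random variable with the GEV distribution G_ξ(·; μ, σ) and let X be a negative random variable with distribution function L_{2,ξ}(·; μ, σ). Then H(Y) < H(X), i.e. the Shannon entropy of the negative log-GEV law strictly exceeds that of the corresponding GEV law. -/

import Mathlib

open MeasureTheory Filter Real Set

/-- The Shannon entropy `H(f) = -∫_{{f > 0}} f x * log (f x) dx` of a density `f`
with respect to Lebesgue measure. -/
noncomputable def shannonEntropy (f : ℝ → ℝ) : ℝ :=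
  -∫ x in {x : ℝ | 0 < f x}, f x * Real.log (f x)

/-- Density of the (power) GEV family with sign `s` (`s = 1` gives the log-GEV
density `l_{1,ξ}` on positive support, `s = -1` the negative log-GEV density
`l_{2,ξ}` on negative support):
`l(x) = (1/(σ|x|)) (1 + s ξ (log|x| - μ)/σ)_+^{-1-1/ξ} exp(-(1 + s ξ (log|x| - μ)/σ)_+^{-1/ξ})`. -/
noncomputable def pgevPdf (s ξ μ σ x : ℝ) : ℝ :=
  if 0 < s * x ∧ 0 < 1 + s * ξ * ((Real.log |x| - μ) / σ) then
    (1 / (σ * |x|)) * (1 + s * ξ * ((Real.log |x| - μ) / σ)) ^ (-1 - 1 / ξ) *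
      Real.exp (-(1 + s * ξ * ((Real.log |x| - μ) / σ)) ^ (-1 / ξ))
  else 0

/-- Density of the GEV distribution `G_ξ(·; μ, σ)`:
`g(x) = (1/σ) (1 + ξ (x - μ)/σ)_+^{-1-1/ξ} exp(-(1 + ξ (x - μ)/σ)_+^{-1/ξ})`. -/
noncomputable def gevPdf (ξ μ σ x : ℝ) : ℝ :=
  if 0 < 1 + (ξ / σ) * (x - μ) then
    (1 / σ) * (1 + (ξ / σ) * (x - μ)) ^ (-1 - 1 / ξ) *
      Real.exp (-(1 + (ξ / σ) * (x - μ)) ^ (-1 / ξ))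
  else 0

/-! Substituting `y = μ + (σ/ξ)(t^{-ξ} - 1)`, i.e. `t = -log G_ξ(y)`, turns the GEV density into
the standard exponential one, so every entropy integral over the support becomes an integral
against `e^{-t} dt` on `(0, ∞)`. A random variable `X` with distribution function `L_{2,ξ}` is
`-exp (2μ - Y)` with `Y` GEV, so the same substitution followed by `y ↦ -exp (2μ - y)` treats
`X`; the two integrands differ by `e^{-t} (2μ - y(t))`, whence
`H(X) = H(Y) + 2μ - 𝔼 Y = H(Y) + μ - (σ/ξ)(Γ(1 - ξ) - 1)`. -/

theorem shannonEntropy_eq_integral_exp_neg {f φ φ' : ℝ → ℝ} (hsupp : {x | 0 < f x} = φ '' Ioi 0)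
    (hφ : ∀ t ∈ Ioi 0, HasDerivWithinAt φ (φ' t) (Ioi 0) t) (hinj : InjOn φ (Ioi 0))
    (hf : ∀ t ∈ Ioi 0, |φ' t| * f (φ t) = exp (-t)) :
    shannonEntropy f = ∫ t in Ioi 0, exp (-t) * (t + log |φ' t|) := by
  rw [shannonEntropy, hsupp, integral_image_eq_integral_abs_deriv_smul measurableSet_Ioi hφ hinj,
    ← integral_neg]
  refine setIntegral_congr_fun measurableSet_Ioi fun t ht => ?_
  have hφ' : |φ' t| ≠ 0 := fun h => by simpa [h] using (hf t ht).symm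
  have hfφ : f (φ t) = exp (-t) / |φ' t| := by rw [← hf t ht]; field_simp
  rw [smul_eq_mul, hfφ, log_div (exp_ne_zero _) hφ', log_exp]
  field_simp
  ring

theorem abs_log_le_two_mul_rpow_add {t : ℝ} (ht : 0 < t) :
    |log t| ≤ 2 * t ^ (1 / 2 : ℝ) + 2 * t ^ (-1 / 2 : ℝ) := by
  have hlog (s : ℝ) : s * log t ≤ t ^ s - 1 := by
    simpa only [log_rpow ht] using log_le_sub_one_of_pos (rpow_pos_of_pos ht s)
  have h₁ := hlog (1 / 2)
  have h₂ := hlog (-1 / 2)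
  rw [abs_le]
  constructor <;> linarith [rpow_pos_of_pos ht (1 / 2 : ℝ), rpow_pos_of_pos ht (-1 / 2 : ℝ)]

theorem integrableOn_exp_neg_mul_rpow {s : ℝ} (hs : -1 < s) :
    IntegrableOn (fun t => exp (-t) * t ^ s) (Ioi 0) := by
  simpa using GammaIntegral_convergent (show 0 < s + 1 by linarith)

theorem integrableOn_exp_neg : IntegrableOn (fun t => exp (-t)) (Ioi 0) := by
  simpa using integrableOn_exp_neg_mul_rpow (s := 0) (by norm_num)

theorem integrableOn_exp_neg_mul_self : IntegrableOn (fun t => exp (-t) * t) (Ioi 0) := by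
  simpa using integrableOn_exp_neg_mul_rpow (s := 1) (by norm_num)

theorem integrableOn_exp_neg_mul_log : IntegrableOn (fun t => exp (-t) * log t) (Ioi 0) := by
  have hbound := ((integrableOn_exp_neg_mul_rpow (s := 1 / 2) (by norm_num)).const_mul 2).add
    ((integrableOn_exp_neg_mul_rpow (s := -1 / 2) (by norm_num)).const_mul 2)
  refine hbound.mono' (by fun_prop) ((ae_restrict_iff' measurableSet_Ioi).2 ?_)
  filter_upwards with t ht
  rw [norm_mul, norm_of_nonneg (exp_pos _).le, norm_eq_abs]
  calc exp (-t) * |log t| ≤ exp (-t) * (2 * t ^ (1 / 2 : ℝ) + 2 * t ^ (-1 / 2 : ℝ)) :=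
        mul_le_mul_of_nonneg_left (abs_log_le_two_mul_rpow_add ht) (exp_pos _).le
    _ = _ := by simp only [Pi.add_apply]; ring

section GEV

variable {ξ μ σ : ℝ}

/-- The quantile of `G_ξ(·; μ, σ)` at `e^{-t}`, so that `G_ξ(gevExpQuantile ξ μ σ t) = e^{-t}`. -/
noncomputable def gevExpQuantile (ξ μ σ t : ℝ) : ℝ :=
  μ + σ / ξ * (t ^ (-ξ) - 1)

theorem one_add_mul_gevExpQuantile_sub (hξ : ξ ≠ 0) (hσ : σ ≠ 0) (t : ℝ) :
    1 + ξ / σ * (gevExpQuantile ξ μ σ t - μ) = t ^ (-ξ) := by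
  unfold gevExpQuantile
  field_simp
  ring

theorem hasDerivAt_gevExpQuantile (hξ : ξ ≠ 0) {t : ℝ} (ht : 0 < t) :
    HasDerivAt (gevExpQuantile ξ μ σ) (-σ * t ^ (-ξ - 1)) t := by
  have h := (((hasDerivAt_rpow_const (p := -ξ) (Or.inl ht.ne')).sub_const 1).const_mul
    (σ / ξ)).const_add μ
  exact h.congr_deriv (by field_simp)

theorem injOn_gevExpQuantile (hξ : ξ ≠ 0) (hσ : σ ≠ 0) :
    InjOn (gevExpQuantile ξ μ σ) (Ioi 0) := by
  intro a ha b hb hab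
  have hpow : a ^ (-ξ) = b ^ (-ξ) := by
    rw [← one_add_mul_gevExpQuantile_sub hξ hσ, ← one_add_mul_gevExpQuantile_sub hξ hσ, hab]
  exact (rpow_left_inj (le_of_lt ha) (le_of_lt hb) (neg_ne_zero.2 hξ)).1 hpow

theorem image_gevExpQuantile_Ioi (hξ : ξ ≠ 0) (hσ : σ ≠ 0) :
    gevExpQuantile ξ μ σ '' Ioi 0 = {y | 0 < 1 + ξ / σ * (y - μ)} := by
  ext y
  constructor
  · rintro ⟨t, ht, rfl⟩
    rw [mem_ofPred_eq, one_add_mul_gevExpQuantile_sub hξ hσ]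
    exact rpow_pos_of_pos ht _
  · intro hy
    refine ⟨(1 + ξ / σ * (y - μ)) ^ (-ξ)⁻¹, rpow_pos_of_pos hy _, ?_⟩
    have h := one_add_mul_gevExpQuantile_sub (μ := μ) hξ hσ ((1 + ξ / σ * (y - μ)) ^ (-ξ)⁻¹)
    rw [rpow_inv_rpow (le_of_lt hy) (neg_ne_zero.2 hξ)] at h
    have h' : ξ / σ * (gevExpQuantile ξ μ σ ((1 + ξ / σ * (y - μ)) ^ (-ξ)⁻¹) - μ) =
        ξ / σ * (y - μ) := by linarith
    simpa using mul_left_cancel₀ (div_ne_zero hξ hσ) h'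

theorem setOf_gevPdf_pos (hσ : 0 < σ) :
    {y | 0 < gevPdf ξ μ σ y} = {y | 0 < 1 + ξ / σ * (y - μ)} := by
  ext y
  simp only [mem_ofPred_eq, gevPdf]
  split_ifs with hy
  · simp only [hy, iff_true]
    positivity
  · simp [hy]

theorem abs_deriv_mul_gevPdf_gevExpQuantile (hξ : ξ ≠ 0) (hσ : 0 < σ) {t : ℝ} (ht : 0 < t) :
    |-σ * t ^ (-ξ - 1)| * gevPdf ξ μ σ (gevExpQuantile ξ μ σ t) = exp (-t) := by
  have hpow : (t ^ (-ξ)) ^ (-1 - 1 / ξ) = t ^ (ξ + 1) := by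
    rw [← rpow_mul ht.le]; congr 1; field_simp; ring
  have hexp : (t ^ (-ξ)) ^ (-1 / ξ) = t := by
    rw [← rpow_mul ht.le, show -ξ * (-1 / ξ) = 1 by field_simp, rpow_one]
  rw [gevPdf, one_add_mul_gevExpQuantile_sub hξ hσ.ne', if_pos (rpow_pos_of_pos ht _), hpow, hexp,
    abs_mul, abs_neg, abs_of_pos hσ, abs_of_pos (rpow_pos_of_pos ht _)]
  have hcancel : t ^ (-ξ - 1) * t ^ (ξ + 1) = 1 := by
    rw [← rpow_add ht]; norm_num
  calc σ * t ^ (-ξ - 1) * (1 / σ * t ^ (ξ + 1) * exp (-t))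
      = (t ^ (-ξ - 1) * t ^ (ξ + 1)) * (σ * (1 / σ)) * exp (-t) := by ring
    _ = exp (-t) := by rw [hcancel, mul_one_div_cancel hσ.ne']; ring

theorem shannonEntropy_gevPdf (hξ : ξ ≠ 0) (hσ : 0 < σ) :
    shannonEntropy (gevPdf ξ μ σ) =
      ∫ t in Ioi 0, exp (-t) * (t + log |-σ * t ^ (-ξ - 1)|) :=
  shannonEntropy_eq_integral_exp_neg
    (by rw [setOf_gevPdf_pos hσ, image_gevExpQuantile_Ioi hξ hσ.ne'])
    (fun _ ht => (hasDerivAt_gevExpQuantile hξ ht).hasDerivWithinAt)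
    (injOn_gevExpQuantile hξ hσ.ne') (fun _ ht => abs_deriv_mul_gevPdf_gevExpQuantile hξ hσ ht)

theorem integrableOn_exp_neg_mul_gevExpQuantile (hξ : ξ < 1) :
    IntegrableOn (fun t => exp (-t) * gevExpQuantile ξ μ σ t) (Ioi 0) :=
  IntegrableOn.congr_fun ((integrableOn_exp_neg.const_mul (μ - σ / ξ)).add
    ((integrableOn_exp_neg_mul_rpow (s := -ξ) (by linarith)).const_mul (σ / ξ)))
    (fun t _ => by simp only [gevExpQuantile, Pi.add_apply]; ring) measurableSet_Ioi

theorem integral_exp_neg_mul_gevExpQuantile (hξ : ξ < 1) :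
    ∫ t in Ioi 0, exp (-t) * gevExpQuantile ξ μ σ t = μ + σ / ξ * (Gamma (1 - ξ) - 1) := by
  have hGamma : ∫ t in Ioi 0, exp (-t) * t ^ (-ξ) = Gamma (1 - ξ) := by
    rw [Gamma_eq_integral (by linarith)]; simp [sub_sub_cancel_left]
  rw [setIntegral_congr_fun (g := fun t => (μ - σ / ξ) * exp (-t) + σ / ξ * (exp (-t) * t ^ (-ξ)))
      measurableSet_Ioi fun t _ => by unfold gevExpQuantile; ring,
    integral_add (integrableOn_exp_neg.const_mul _)
      ((integrableOn_exp_neg_mul_rpow (by linarith)).const_mul _),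
    integral_const_mul, integral_const_mul, integral_exp_neg_Ioi_zero, hGamma]
  ring

theorem integrableOn_exp_neg_mul_add_log_abs_deriv_gevExpQuantile (hσ : 0 < σ) :
    IntegrableOn (fun t => exp (-t) * (t + log |-σ * t ^ (-ξ - 1)|)) (Ioi 0) := by
  refine IntegrableOn.congr_fun ((integrableOn_exp_neg_mul_self.add
    (integrableOn_exp_neg.const_mul (log σ))).add
    (integrableOn_exp_neg_mul_log.const_mul (-ξ - 1))) (fun t ht => ?_) measurableSet_Ioi
  have ht : (0 : ℝ) < t := ht
  rw [abs_mul, abs_neg, abs_of_pos hσ, abs_of_pos (rpow_pos_of_pos ht _),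
    log_mul hσ.ne' (rpow_pos_of_pos ht _).ne', log_rpow ht]
  simp only [Pi.add_apply]
  ring

end GEV

section NegLogGEV

variable {ξ μ σ : ℝ}

theorem pgevPdf_neg_one_neg_exp (y : ℝ) :
    pgevPdf (-1) ξ μ σ (-exp (2 * μ - y)) = gevPdf ξ μ σ y / exp (2 * μ - y) := by
  have hbase : 1 + -1 * ξ * ((log |-exp (2 * μ - y)| - μ) / σ) = 1 + ξ / σ * (y - μ) := by
    rw [abs_neg, abs_of_pos (exp_pos _), log_exp]; ring
  have hneg : 0 < -1 * -exp (2 * μ - y) := by simp [exp_pos]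
  unfold pgevPdf gevPdf
  rw [hbase, abs_neg, abs_of_pos (exp_pos _)]
  simp only [hneg, true_and]
  split_ifs
  · field_simp
  · simp

theorem setOf_pgevPdf_neg_one_pos :
    {x | 0 < pgevPdf (-1) ξ μ σ x} = (fun y => -exp (2 * μ - y)) '' {y | 0 < gevPdf ξ μ σ y} := by
  ext x
  constructor
  · intro hx
    have hxneg : x < 0 := by
      by_contra hx0
      simp [pgevPdf, hx0] at hx
    have hx_eq : -exp (2 * μ - (2 * μ - log (-x))) = x := by
      rw [sub_sub_cancel, exp_log (neg_pos.2 hxneg), neg_neg]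
    refine ⟨2 * μ - log (-x), ?_, hx_eq⟩
    rw [mem_ofPred_eq, ← hx_eq, pgevPdf_neg_one_neg_exp] at hx
    exact (div_pos_iff_of_pos_right (exp_pos _)).1 hx
  · rintro ⟨y, hy, rfl⟩
    rw [mem_ofPred_eq, pgevPdf_neg_one_neg_exp]
    exact div_pos hy (exp_pos _)

theorem shannonEntropy_pgevPdf_neg_one (hξ : ξ ≠ 0) (hσ : 0 < σ) :
    shannonEntropy (pgevPdf (-1) ξ μ σ) = ∫ t in Ioi 0,
      exp (-t) * (t + log |exp (2 * μ - gevExpQuantile ξ μ σ t) * (-σ * t ^ (-ξ - 1))|) := by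
  have hmono : StrictMono fun y => -exp (2 * μ - y) := fun a b hab => by
    simpa using exp_lt_exp.2 (show 2 * μ - b < 2 * μ - a by linarith)
  refine shannonEntropy_eq_integral_exp_neg (φ := fun t => -exp (2 * μ - gevExpQuantile ξ μ σ t))
    ?_ (fun t ht => ?_) (hmono.injective.comp_injOn (injOn_gevExpQuantile hξ hσ.ne'))
    (fun t ht => ?_)
  · rw [setOf_pgevPdf_neg_one_pos, setOf_gevPdf_pos hσ, ← image_gevExpQuantile_Ioi hξ hσ.ne',
      image_image]
  · exact (((hasDerivAt_gevExpQuantile hξ ht).const_sub (2 * μ)).exp.neg.congr_deriv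
      (by ring)).hasDerivWithinAt
  · rw [abs_mul, abs_of_pos (exp_pos _), pgevPdf_neg_one_neg_exp,
      ← abs_deriv_mul_gevPdf_gevExpQuantile hξ hσ ht]
    field_simp

theorem shannonEntropy_pgevPdf_neg_one_eq (hξ₀ : ξ ≠ 0) (hξ₁ : ξ < 1) (hσ : 0 < σ) :
    shannonEntropy (pgevPdf (-1) ξ μ σ) =
      shannonEntropy (gevPdf ξ μ σ) + (μ - σ / ξ * (Gamma (1 - ξ) - 1)) := by
  have hsplit : ∀ t ∈ Ioi (0 : ℝ),
      exp (-t) * (t + log |exp (2 * μ - gevExpQuantile ξ μ σ t) * (-σ * t ^ (-ξ - 1))|) =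
        exp (-t) * (t + log |-σ * t ^ (-ξ - 1)|) +
          (2 * μ * exp (-t) - exp (-t) * gevExpQuantile ξ μ σ t) := fun t ht => by
    have hderiv : -σ * t ^ (-ξ - 1) ≠ 0 :=
      mul_ne_zero (neg_ne_zero.2 hσ.ne') (rpow_pos_of_pos ht _).ne'
    rw [abs_mul, abs_of_pos (exp_pos _), log_mul (exp_ne_zero _) (abs_ne_zero.2 hderiv), log_exp]
    ring
  have hmean := integrableOn_exp_neg_mul_gevExpQuantile (μ := μ) (σ := σ) hξ₁
  have hshift : IntegrableOn
      (fun t => 2 * μ * exp (-t) - exp (-t) * gevExpQuantile ξ μ σ t) (Ioi 0) :=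
    (integrableOn_exp_neg.const_mul _).sub hmean
  rw [shannonEntropy_pgevPdf_neg_one hξ₀ hσ, shannonEntropy_gevPdf hξ₀ hσ,
    setIntegral_congr_fun measurableSet_Ioi hsplit,
    integral_add (integrableOn_exp_neg_mul_add_log_abs_deriv_gevExpQuantile hσ) hshift,
    integral_sub (integrableOn_exp_neg.const_mul _) hmean,
    integral_const_mul, integral_exp_neg_Ioi_zero, integral_exp_neg_mul_gevExpQuantile hξ₁]
  ring

end NegLogGEV

theorem stmt_14_general (ξ μ σ : ℝ) (hξ : ξ < 0) (hσ : 0 < σ)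
    (hpos : 0 < μ - (σ / ξ) * (Real.Gamma (1 - ξ) - 1)) :
    shannonEntropy (gevPdf ξ μ σ) < shannonEntropy (pgevPdf (-1) ξ μ σ) := by
  rw [shannonEntropy_pgevPdf_neg_one_eq hξ.ne (by linarith) hσ]
  linarith

/-- Let `ξ < 0`, `σ > 0` with `μ - (σ/ξ)(Γ(1-ξ) - 1) > 0`. If `Y`
has the GEV distribution `G_ξ(·; μ, σ)` (density `gevPdf ξ μ σ`) and `X` is a
negative random variable with distribution function `L_{2,ξ}(·; μ, σ)`
(density `pgevPdf (-1) ξ μ σ`), then `H(Y) < H(X)`. -/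
theorem stmt_14 {Ω : Type*} [MeasurableSpace Ω] (P : Measure Ω) [IsProbabilityMeasure P]
    (ξ μ σ : ℝ) (hξ : ξ < 0) (hσ : 0 < σ)
    (hpos : 0 < μ - (σ / ξ) * (Real.Gamma (1 - ξ) - 1))
    (Y X : Ω → ℝ) (hYm : Measurable Y) (hXm : Measurable X) (hXneg : ∀ ω, X ω < 0)
    (hYd : Measure.map Y P = MeasureTheory.Measure.withDensity volume
      (fun x => ENNReal.ofReal (gevPdf ξ μ σ x)))
    (hXd : Measure.map X P = MeasureTheory.Measure.withDensity volume
      (fun x => ENNReal.ofReal (pgevPdf (-1) ξ μ σ x))) :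
    shannonEntropy (gevPdf ξ μ σ) < shannonEntropy (pgevPdf (-1) ξ μ σ) :=
  stmt_14_general ξ μ σ hξ hσ hpos
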